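/- arXiv:math-ph/0402032 — 3 statements merged into one kernel-verified Lean document; each statement's English description precedes it below -/
import Mathlib

section
/- Let ω : ℝ³ → ℝ³ be a C¹ divergence-free vector field, and let x be a point with ω(x) ≠ 0. Define ξ = ω/|ω| on the open set N = {x : ω(x) ≠ 0}. Then along any integral curve s ↦ γ(s) of ξ parametrized by arc length (γ' = ξ ∘ γ), the function f(s) = |ω(γ(s))| satisfies the ODE f'(s) = −(div ξ)(γ(s)) · f(s). -/
noncomputable def div3 (f : EuclideanSpace ℝ (Fin 3) → EuclideanSpace ℝ (Fin 3))
    (x : EuclideanSpace ℝ (Fin 3)) : ℝ :=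
  ∑ i : Fin 3, fderiv ℝ f x (EuclideanSpace.single i 1) i

lemma sum_single_mul (Z : EuclideanSpace ℝ (Fin 3) →L[ℝ] ℝ) (v : EuclideanSpace ℝ (Fin 3)) :
    ∑ i : Fin 3, Z (EuclideanSpace.single i 1) * v i = Z v := by
  have hv : v = ∑ i : Fin 3, v i • EuclideanSpace.single i 1 := by
    ext j
    rw [WithLp.ofLp_sum, Finset.sum_apply]
    simp [EuclideanSpace.single_apply]
  conv_rhs => rw [hv]
  rw [map_sum]
  simp [mul_comm]

lemma hasFDerivAt_norm_comp (ω : EuclideanSpace ℝ (Fin 3) → EuclideanSpace ℝ (Fin 3))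
    {L : EuclideanSpace ℝ (Fin 3) →L[ℝ] EuclideanSpace ℝ (Fin 3)}
    {x : EuclideanSpace ℝ (Fin 3)} (hL : HasFDerivAt ω L x) (h0 : ω x ≠ 0) :
    HasFDerivAt (fun y => ‖ω y‖) (‖ω x‖⁻¹ • ((innerSL ℝ (ω x)).comp L)) x := by
  have hinner : HasFDerivAt (fun y => (inner ℝ (ω y) (ω y) : ℝ))
      ((fderivInnerCLM ℝ (ω x, ω x)).comp (L.prod L)) x := hL.inner ℝ hL
  have hne : (inner ℝ (ω x) (ω x) : ℝ) ≠ 0 := inner_self_ne_zero.2 h0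
  have h := hinner.sqrt hne
  have heq : (fun y => Real.sqrt (inner ℝ (ω y) (ω y) : ℝ)) = fun y => ‖ω y‖ := by
    funext y
    rw [real_inner_self_eq_norm_mul_norm, Real.sqrt_mul_self (norm_nonneg _)]
  rw [heq] at h
  refine h.congr_fderiv ?_
  ext v
  have hsq : Real.sqrt (inner ℝ (ω x) (ω x) : ℝ) = ‖ω x‖ := by
    rw [real_inner_self_eq_norm_mul_norm, Real.sqrt_mul_self (norm_nonneg _)]
  have hn0 : ‖ω x‖ ≠ 0 := norm_ne_zero_iff.2 h0
  simp only [ContinuousLinearMap.smul_apply, ContinuousLinearMap.coe_comp', Function.comp_apply,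
    innerSL_apply_apply, fderivInnerCLM_apply, ContinuousLinearMap.prod_apply, hsq, smul_eq_mul]
  rw [real_inner_comm (L v) (ω x)]
  field_simp
  ring

/-- Along an arc-length integral curve `γ` of the unit vorticity direction `ξ = ω/|ω|`,
the magnitude `f(s) = |ω(γ s)|` satisfies `f' = -(div ξ)(γ s) · f`. -/
theorem stmt0
    (ω ξ : EuclideanSpace ℝ (Fin 3) → EuclideanSpace ℝ (Fin 3))
    (hω : ContDiff ℝ 1 ω)
    (hdiv : ∀ x, div3 ω x = 0)
    (hξ : ∀ x, ω x ≠ 0 → ξ x = ‖ω x‖⁻¹ • ω x)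
    (γ : ℝ → EuclideanSpace ℝ (Fin 3))
    (hγN : ∀ s : ℝ, ω (γ s) ≠ 0)
    (hγ : ∀ s : ℝ, HasDerivAt γ (ξ (γ s)) s) :
    ∀ s : ℝ, HasDerivAt (fun s => ‖ω (γ s)‖) (-(div3 ξ (γ s)) * ‖ω (γ s)‖) s := by
  intro s
  set x := γ s with hxdef
  have hne := hγN s
  set n := ‖ω x‖ with hndef
  have hn0 : n ≠ 0 := norm_ne_zero_iff.2 hne
  have hL : HasFDerivAt ω (fderiv ℝ ω x) x :=
    (hω.differentiable one_ne_zero x).hasFDerivAt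
  set L := fderiv ℝ ω x with hLdef
  set Nm := n⁻¹ • ((innerSL ℝ (ω x)).comp L) with hNmdef
  have hnorm : HasFDerivAt (fun y => ‖ω y‖) Nm x := hasFDerivAt_norm_comp ω hL hne
  have hinv : HasFDerivAt (fun y => ‖ω y‖⁻¹) ((-(n ^ 2)⁻¹) • Nm) x :=
    (hasDerivAt_inv hn0).comp_hasFDerivAt x hnorm
  have hsm : HasFDerivAt (fun y => ‖ω y‖⁻¹ • ω y)
      (n⁻¹ • L + ((-(n ^ 2)⁻¹) • Nm).smulRight (ω x)) x := hinv.smul hL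
  have hev : ξ =ᶠ[nhds x] fun y => ‖ω y‖⁻¹ • ω y := by
    have h1 : ∀ᶠ y in nhds x, ω y ≠ 0 :=
      (hω.continuous.continuousAt (x := x)).eventually_ne hne
    filter_upwards [h1] with y hy using hξ y hy
  have hξD : HasFDerivAt ξ (n⁻¹ • L + ((-(n ^ 2)⁻¹) • Nm).smulRight (ω x)) x :=
    hsm.congr_of_eventuallyEq hev
  have hsum0 : ∑ i : Fin 3, L (EuclideanSpace.single i 1) i = 0 := hdiv x
  have hdivξ : div3 ξ x = -(n ^ 2)⁻¹ * (n⁻¹ * (inner ℝ (ω x) (L (ω x)) : ℝ)) := by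
    unfold div3
    rw [hξD.fderiv]
    have : ∀ i : Fin 3,
        (n⁻¹ • L + ((-(n ^ 2)⁻¹) • Nm).smulRight (ω x)) (EuclideanSpace.single i 1) i
        = n⁻¹ * L (EuclideanSpace.single i 1) i
          + (-(n ^ 2)⁻¹ * (n⁻¹ * ((innerSL ℝ (ω x)).comp L) (EuclideanSpace.single i 1)))
            * ω x i := by
      intro i
      simp [Nm, ContinuousLinearMap.smulRight_apply, PiLp.add_apply, PiLp.smul_apply,
        smul_eq_mul, mul_assoc]
    rw [Finset.sum_congr rfl fun i _ => this i]
    rw [Finset.sum_add_distrib, ← Finset.mul_sum, hsum0, mul_zero, zero_add]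
    have h2 : ∑ i : Fin 3,
        (-(n ^ 2)⁻¹ * (n⁻¹ * ((innerSL ℝ (ω x)).comp L) (EuclideanSpace.single i 1))) * ω x i
        = -(n ^ 2)⁻¹ * (n⁻¹ * ∑ i : Fin 3,
            ((innerSL ℝ (ω x)).comp L) (EuclideanSpace.single i 1) * ω x i) := by
      rw [Finset.mul_sum, Finset.mul_sum]
      congr 1; funext i; ring
    rw [h2, sum_single_mul]
    simp [innerSL_apply_apply]
  have hcomp : HasDerivAt (fun s => ‖ω (γ s)‖) (Nm (ξ x)) s := by
    have := hnorm.comp_hasDerivAt s (hγ s)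
    exact this
  have hξx : ξ x = n⁻¹ • ω x := hξ x hne
  have hNmval : Nm (ξ x) = n⁻¹ * (n⁻¹ * (inner ℝ (ω x) (L (ω x)) : ℝ)) := by
    rw [hξx]
    simp [Nm, innerSL_apply_apply, smul_eq_mul, mul_assoc]
  have hfinal : -(div3 ξ x) * n = Nm (ξ x) := by
    rw [hdivξ, hNmval]
    field_simp
  rw [hfinal]
  exact hcomp
end

section
/- Let ω : ℝ³ → ℝ³ be a C¹ divergence-free vector field, ξ = ω/|ω| on N = {ω ≠ 0}, and let γ : [a,b] → N be an arc-length integral curve of ξ. Then |ω(γ(b))| = |ω(γ(a))| · exp(−∫_a^b (div ξ)(γ(s)) ds). -/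
open scoped RealInnerProductSpace

lemma sum_smul_single (x : EuclideanSpace ℝ (Fin 3)) :
    ∑ i, x i • EuclideanSpace.single i (1:ℝ) = x := by
  have := (EuclideanSpace.basisFun (Fin 3) ℝ).sum_repr x
  simpa [EuclideanSpace.basisFun_apply, EuclideanSpace.basisFun_repr] using this

/-- derivative of `‖ω ·‖` at a point where `ω ≠ 0`. -/
lemma hasFDerivAt_norm_omega (ω : EuclideanSpace ℝ (Fin 3) → EuclideanSpace ℝ (Fin 3))
    (hω : ContDiff ℝ 1 ω) (x : EuclideanSpace ℝ (Fin 3)) (hx : ω x ≠ 0) :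
    HasFDerivAt (fun y => ‖ω y‖)
      (‖ω x‖⁻¹ • ((innerSL ℝ (ω x)).comp (fderiv ℝ ω x))) x := by
  have hd := (hω.differentiable one_ne_zero x).hasFDerivAt
  have hq := hd.inner ℝ hd
  have hne : ⟪ω x, ω x⟫ ≠ 0 := fun h => hx ((inner_self_eq_zero (𝕜 := ℝ)).mp h)
  have hs := hq.sqrt hne
  have hfun : (fun y => Real.sqrt ⟪ω y, ω y⟫) = fun y => ‖ω y‖ := by
    funext y
    rw [real_inner_self_eq_norm_mul_norm, Real.sqrt_mul_self (norm_nonneg _)]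
  rw [hfun] at hs
  refine hs.congr_fderiv (Eq.symm ?_)
  ext v
  have hsq : Real.sqrt ⟪ω x, ω x⟫ = ‖ω x‖ := by
    rw [real_inner_self_eq_norm_mul_norm, Real.sqrt_mul_self (norm_nonneg _)]
  simp only [ContinuousLinearMap.smul_apply, ContinuousLinearMap.coe_comp', Function.comp_apply,
    innerSL_apply_apply, fderivInnerCLM_apply, ContinuousLinearMap.prod_apply, hsq]
  rw [real_inner_comm (fderiv ℝ ω x v) (ω x)]
  have h0 : ‖ω x‖ ≠ 0 := norm_ne_zero_iff.mpr hx
  field_simp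
  ring

/-- The key pointwise identity for `div3 ξ` on `{ω ≠ 0}`. -/
lemma div3_xi_eq (ω ξ : EuclideanSpace ℝ (Fin 3) → EuclideanSpace ℝ (Fin 3))
    (hω : ContDiff ℝ 1 ω)
    (hdiv : ∀ x, div3 ω x = 0)
    (hξ : ∀ x, ω x ≠ 0 → ξ x = ‖ω x‖⁻¹ • ω x)
    (x : EuclideanSpace ℝ (Fin 3)) (hx : ω x ≠ 0) :
    div3 ξ x = -(‖ω x‖ ^ 3)⁻¹ * ⟪ω x, fderiv ℝ ω x (ω x)⟫ := by
  have h0 : ‖ω x‖ ≠ 0 := norm_ne_zero_iff.mpr hx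
  have hd := (hω.differentiable one_ne_zero x).hasFDerivAt
  have hn := hasFDerivAt_norm_omega ω hω x hx
  have hninv : HasFDerivAt (fun y => ‖ω y‖⁻¹)
      ((-(‖ω x‖ ^ 2)⁻¹) • (‖ω x‖⁻¹ • ((innerSL ℝ (ω x)).comp (fderiv ℝ ω x)))) x :=
    (hasDerivAt_inv h0).comp_hasFDerivAt x hn
  have hG : HasFDerivAt (fun y => ‖ω y‖⁻¹ • ω y)
      (‖ω x‖⁻¹ • (fderiv ℝ ω x) +
        ((-(‖ω x‖ ^ 2)⁻¹) • (‖ω x‖⁻¹ • ((innerSL ℝ (ω x)).comp (fderiv ℝ ω x)))).smulRight (ω x))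
      x := hninv.smul hd
  -- ξ agrees with this function near x
  have hopen : IsOpen {y | ω y ≠ 0} := by
    have : {y | ω y ≠ 0} = ω ⁻¹' ({0}ᶜ) := rfl
    rw [this]
    exact (isOpen_compl_singleton).preimage (hω.continuous)
  have hev : ξ =ᶠ[nhds x] fun y => ‖ω y‖⁻¹ • ω y := by
    filter_upwards [hopen.mem_nhds hx] with y hy
    exact hξ y hy
  have hfd : fderiv ℝ ξ x = fderiv ℝ (fun y => ‖ω y‖⁻¹ • ω y) x := hev.fderiv_eq
  rw [div3, hfd, hG.fderiv]
  -- expand componentwise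
  have hexp : ∀ i : Fin 3,
      ((‖ω x‖⁻¹ • (fderiv ℝ ω x) +
        ((-(‖ω x‖ ^ 2)⁻¹) • (‖ω x‖⁻¹ • ((innerSL ℝ (ω x)).comp (fderiv ℝ ω x)))).smulRight (ω x))
        (EuclideanSpace.single i 1)) i
      = ‖ω x‖⁻¹ * (fderiv ℝ ω x (EuclideanSpace.single i 1)) i
        + (-(‖ω x‖ ^ 3)⁻¹ * ⟪ω x, fderiv ℝ ω x (EuclideanSpace.single i 1)⟫) * (ω x) i := by
    intro i
    simp only [ContinuousLinearMap.add_apply, ContinuousLinearMap.smul_apply,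
      ContinuousLinearMap.smulRight_apply, ContinuousLinearMap.coe_comp', Function.comp_apply,
      innerSL_apply_apply, PiLp.add_apply, PiLp.smul_apply, smul_eq_mul]
    rw [show (‖ω x‖ ^ 3)⁻¹ = (‖ω x‖ ^ 2)⁻¹ * ‖ω x‖⁻¹ by rw [← mul_inv, ← pow_succ]]
    ring
  rw [Finset.sum_congr rfl fun i _ => hexp i]
  rw [Finset.sum_add_distrib]
  have h1 : ∑ i : Fin 3, ‖ω x‖⁻¹ * (fderiv ℝ ω x (EuclideanSpace.single i 1)) i = 0 := by
    rw [← Finset.mul_sum]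
    have := hdiv x
    rw [div3] at this
    rw [this, mul_zero]
  have h2 : ∑ i : Fin 3,
      (-(‖ω x‖ ^ 3)⁻¹ * ⟪ω x, fderiv ℝ ω x (EuclideanSpace.single i 1)⟫) * (ω x) i
      = -(‖ω x‖ ^ 3)⁻¹ * ⟪ω x, fderiv ℝ ω x (ω x)⟫ := by
    have : ∀ i : Fin 3,
        (-(‖ω x‖ ^ 3)⁻¹ * ⟪ω x, fderiv ℝ ω x (EuclideanSpace.single i 1)⟫) * (ω x) i
        = -(‖ω x‖ ^ 3)⁻¹ * ⟪ω x, fderiv ℝ ω x ((ω x) i • EuclideanSpace.single i 1)⟫ := by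
      intro i
      rw [map_smul, inner_smul_right]
      ring
    rw [Finset.sum_congr rfl fun i _ => this i, ← Finset.mul_sum, ← inner_sum, ← map_sum,
      sum_smul_single]
  rw [h1, h2, zero_add]

/-- Along an arc-length integral curve `γ : [a,b] → {ω ≠ 0}` of `ξ = ω/|ω|`,
`|ω(γ b)| = |ω(γ a)| · exp(-∫_a^b (div ξ)(γ s) ds)`. -/
theorem stmt1
    (ω ξ : EuclideanSpace ℝ (Fin 3) → EuclideanSpace ℝ (Fin 3))
    (hω : ContDiff ℝ 1 ω)
    (hdiv : ∀ x, div3 ω x = 0)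
    (hξ : ∀ x, ω x ≠ 0 → ξ x = ‖ω x‖⁻¹ • ω x)
    (a b : ℝ) (hab : a ≤ b)
    (γ : ℝ → EuclideanSpace ℝ (Fin 3))
    (hγN : ∀ s ∈ Set.Icc a b, ω (γ s) ≠ 0)
    (hγ : ∀ s ∈ Set.Icc a b, HasDerivAt γ (ξ (γ s)) s) :
    ‖ω (γ b)‖ = ‖ω (γ a)‖ * Real.exp (-∫ s in a..b, div3 ξ (γ s)) := by
  have hωd : Differentiable ℝ ω := hω.differentiable one_ne_zero
  set ρ : ℝ → ℝ := fun s => max a (min s b) with hρdef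
  have hρc : Continuous ρ := continuous_const.max (continuous_id.min continuous_const)
  have hρmem : ∀ s, ρ s ∈ Set.Icc a b := fun s =>
    ⟨le_max_left _ _, max_le hab (min_le_right _ _)⟩
  have hρeq : ∀ s ∈ Set.Icc a b, ρ s = s := by
    intro s hs
    rw [hρdef]
    simp only
    rw [min_eq_left hs.2, max_eq_right hs.1]
  have hγc : ContinuousOn γ (Set.Icc a b) := fun s hs =>
    (hγ s hs).continuousAt.continuousWithinAt
  have hγρ : Continuous (fun s => γ (ρ s)) := hγc.comp_continuous hρc hρmem
  set g : ℝ → ℝ := fun s =>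
    -(‖ω (γ (ρ s))‖ ^ 3)⁻¹ * ⟪ω (γ (ρ s)), fderiv ℝ ω (γ (ρ s)) (ω (γ (ρ s)))⟫ with hgdef
  have hωγ : Continuous fun s => ω (γ (ρ s)) := hω.continuous.comp hγρ
  have hωγne : ∀ s, ω (γ (ρ s)) ≠ 0 := fun s => hγN _ (hρmem s)
  have hgc : Continuous g := by
    apply Continuous.mul
    · exact (Continuous.inv₀ (hωγ.norm.pow 3)
        (fun s => pow_ne_zero 3 (norm_ne_zero_iff.mpr (hωγne s)))).neg
    · exact Continuous.inner hωγ
        (((hω.continuous_fderiv one_ne_zero).comp hγρ).clm_apply hωγ)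
  have hgeq : ∀ s ∈ Set.Icc a b, div3 ξ (γ s) = g s := by
    intro s hs
    rw [div3_xi_eq ω ξ hω hdiv hξ (γ s) (hγN s hs), hgdef]
    simp only [hρeq s hs]
  set G : ℝ → ℝ := fun u => ∫ t in a..u, g t with hGdef
  have hG : ∀ u, HasDerivAt G (g u) u := fun u =>
    (hgc.integral_hasStrictDerivAt a u).hasDerivAt
  have hf' : ∀ s ∈ Set.Icc a b, HasDerivAt (fun t => ‖ω (γ t)‖) (-(g s) * ‖ω (γ s)‖) s := by
    intro s hs
    have hx : ω (γ s) ≠ 0 := hγN s hs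
    have h0 : ‖ω (γ s)‖ ≠ 0 := norm_ne_zero_iff.mpr hx
    have hc1 : HasDerivAt (fun t => ω (γ t)) (fderiv ℝ ω (γ s) (ξ (γ s))) s :=
      (hωd (γ s)).hasFDerivAt.comp_hasDerivAt s (hγ s hs)
    have hq := hc1.inner ℝ hc1
    have hne : ⟪ω (γ s), ω (γ s)⟫ ≠ 0 := fun h => hx ((inner_self_eq_zero (𝕜 := ℝ)).mp h)
    have hsq := hq.sqrt hne
    have hfun : (fun t => Real.sqrt ⟪ω (γ t), ω (γ t)⟫) = fun t => ‖ω (γ t)‖ := by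
      funext t
      rw [real_inner_self_eq_norm_mul_norm, Real.sqrt_mul_self (norm_nonneg _)]
    rw [hfun] at hsq
    convert hsq using 1
    have hsqv : Real.sqrt ⟪ω (γ s), ω (γ s)⟫ = ‖ω (γ s)‖ := by
      rw [real_inner_self_eq_norm_mul_norm, Real.sqrt_mul_self (norm_nonneg _)]
    rw [hsqv, hgdef]
    simp only [hρeq s hs]
    rw [hξ (γ s) hx, map_smul, inner_smul_right, real_inner_smul_left,
      real_inner_comm (fderiv ℝ ω (γ s) (ω (γ s))) (ω (γ s))]
    field_simp
    ring
  set h : ℝ → ℝ := fun t => ‖ω (γ t)‖ * Real.exp (G t) with hhdef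
  have hh' : ∀ s ∈ Set.Icc a b, HasDerivAt h 0 s := by
    intro s hs
    have := (hf' s hs).mul ((hG s).exp)
    refine this.congr_deriv ?_
    ring
  have hcont : ContinuousOn h (Set.Icc a b) := fun s hs =>
    (hh' s hs).continuousAt.continuousWithinAt
  have hconst := constant_of_has_deriv_right_zero hcont
    (fun s hs => (hh' s (Set.Ico_subset_Icc_self hs)).hasDerivWithinAt)
  have hb' := hconst b (Set.right_mem_Icc.mpr hab)
  have hGa : G a = 0 := intervalIntegral.integral_same
  have hint : (∫ s in a..b, div3 ξ (γ s)) = G b := by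
    rw [hGdef]
    apply intervalIntegral.integral_congr
    intro s hs
    exact hgeq s (by rwa [Set.uIcc_of_le hab] at hs)
  rw [hint]
  have hkey : ‖ω (γ b)‖ * Real.exp (G b) = ‖ω (γ a)‖ := by
    simpa [hhdef, hGa] using hb'
  rw [Real.exp_neg, ← hkey]
  field_simp
end

section
/- Under the hypotheses of the previous statement, if additionally |∫_a^b (div ξ)(γ(s)) ds| ≤ C for a constant C ≥ 0, then e^{−C} ≤ |ω(γ(b))| / |ω(γ(a))| ≤ e^{C}. In particular the magnitudes of ω at any two points of the integral curve are comparable with constant e^C. -/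
open scoped RealInnerProductSpace

section Aux

local notation "E3" => EuclideanSpace ℝ (Fin 3)

/-- decompose application of a linear functional via the standard basis -/
lemma aux_sum_single (L : E3 →L[ℝ] ℝ) (v : E3) :
    ∑ i : Fin 3, v i * L (EuclideanSpace.single i 1) = L v := by
  have hv : v = ∑ i : Fin 3, v i • EuclideanSpace.single i 1 := by
    ext j
    rw [WithLp.ofLp_sum, Finset.sum_apply]
    simp [EuclideanSpace.single_apply]
  conv_rhs => rw [hv]
  rw [map_sum]
  simp [mul_comm]

lemma aux_norm_eq_sqrt (v : E3) : ‖v‖ = Real.sqrt ⟪v, v⟫ := by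
  rw [real_inner_self_eq_norm_mul_norm, Real.sqrt_mul_self (norm_nonneg v)]

/-- derivative of `y ↦ ‖ω y‖⁻¹` where `ω x ≠ 0` -/
lemma aux_hasFDerivAt_invnorm (ω : E3 → E3) (hω : ContDiff ℝ 1 ω) (x : E3)
    (hx : ω x ≠ 0) :
    HasFDerivAt (fun y => ‖ω y‖⁻¹)
      ((-(‖ω x‖ ^ 3)⁻¹) • ((innerSL ℝ (ω x)).comp (fderiv ℝ ω x))) x := by
  have hD : HasFDerivAt ω (fderiv ℝ ω x) x :=
    (hω.differentiable one_ne_zero x).hasFDerivAt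
  have hQ := hD.inner ℝ hD
  have hQx : ⟪ω x, ω x⟫ ≠ 0 := inner_self_ne_zero.2 hx
  have hs := hQ.sqrt hQx
  have hnx : ‖ω x‖ ≠ 0 := norm_ne_zero_iff.2 hx
  have hsx : Real.sqrt ⟪ω x, ω x⟫ ≠ 0 := by rw [← aux_norm_eq_sqrt]; exact hnx
  have hi := (hasDerivAt_inv hsx).comp_hasFDerivAt x hs
  have heq : (fun y => ‖ω y‖⁻¹) = fun y => (Real.sqrt ⟪ω y, ω y⟫)⁻¹ := by
    funext y; rw [aux_norm_eq_sqrt]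
  simp only [Function.comp_def] at hi
  rw [← heq] at hi
  convert hi using 1
  any_goals rfl
  ext v
  simp only [ContinuousLinearMap.coe_smul', Pi.smul_apply, ContinuousLinearMap.coe_comp',
    Function.comp_apply, innerSL_apply_apply, ContinuousLinearMap.prod_apply, fderivInnerCLM_apply,
    smul_eq_mul]
  rw [← aux_norm_eq_sqrt]
  rw [real_inner_comm (fderiv ℝ ω x v) (ω x)]
  field_simp
  ring

/-- the divergence of `ξ = ω/‖ω‖` at a point where `ω ≠ 0` -/
lemma aux_div3_xi (ω ξ : E3 → E3) (hω : ContDiff ℝ 1 ω)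
    (hdiv : ∀ x, div3 ω x = 0)
    (hξ : ∀ x, ω x ≠ 0 → ξ x = ‖ω x‖⁻¹ • ω x) (x : E3) (hx : ω x ≠ 0) :
    div3 ξ x = -(‖ω x‖ ^ 3)⁻¹ * ⟪ω x, fderiv ℝ ω x (ω x)⟫ := by
  set D := fderiv ℝ ω x with hDdef
  set L : E3 →L[ℝ] ℝ := (-(‖ω x‖ ^ 3)⁻¹) • ((innerSL ℝ (ω x)).comp D) with hLdef
  have hD : HasFDerivAt ω D x := (hω.differentiable one_ne_zero x).hasFDerivAt
  have hf := aux_hasFDerivAt_invnorm ω hω x hx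
  have hg : HasFDerivAt (fun y => ‖ω y‖⁻¹ • ω y)
      (‖ω x‖⁻¹ • D + L.smulRight (ω x)) x := hf.smul hD
  have hU : IsOpen {y : E3 | ω y ≠ 0} :=
    isOpen_compl_iff.mpr (isClosed_singleton.preimage hω.continuous) |>.mono le_rfl
  have hEq : ξ =ᶠ[nhds x] fun y => ‖ω y‖⁻¹ • ω y := by
    filter_upwards [hU.mem_nhds hx] with y hy using hξ y hy
  have hfd : fderiv ℝ ξ x = ‖ω x‖⁻¹ • D + L.smulRight (ω x) := by
    rw [hEq.fderiv_eq, hg.fderiv]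
  unfold div3
  rw [hfd]
  have : ∀ i : Fin 3,
      ((‖ω x‖⁻¹ • D + L.smulRight (ω x)) (EuclideanSpace.single i 1)) i
      = ‖ω x‖⁻¹ * (D (EuclideanSpace.single i 1)) i
        + (ω x) i * L (EuclideanSpace.single i 1) := by
    intro i
    simp [mul_comm]
  rw [Finset.sum_congr rfl fun i _ => this i, Finset.sum_add_distrib, ← Finset.mul_sum,
    aux_sum_single]
  have hdω : ∑ i : Fin 3, (D (EuclideanSpace.single i 1)) i = 0 := hdiv x
  rw [hdω, mul_zero, zero_add]
  simp [hLdef, mul_comm]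

end Aux

/-- If moreover `|∫_a^b (div ξ)(γ s) ds| ≤ C`, then the vorticity magnitudes at the two
endpoints of the integral curve are comparable: `e^{-C} ≤ |ω(γ b)|/|ω(γ a)| ≤ e^C`. -/
theorem stmt2
    (ω ξ : EuclideanSpace ℝ (Fin 3) → EuclideanSpace ℝ (Fin 3))
    (hω : ContDiff ℝ 1 ω)
    (hdiv : ∀ x, div3 ω x = 0)
    (hξ : ∀ x, ω x ≠ 0 → ξ x = ‖ω x‖⁻¹ • ω x)
    (a b : ℝ) (hab : a ≤ b)
    (γ : ℝ → EuclideanSpace ℝ (Fin 3))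
    (hγN : ∀ s ∈ Set.Icc a b, ω (γ s) ≠ 0)
    (hγ : ∀ s ∈ Set.Icc a b, HasDerivAt γ (ξ (γ s)) s)
    (C : ℝ) (hC : 0 ≤ C)
    (hint : |∫ s in a..b, div3 ξ (γ s)| ≤ C) :
    Real.exp (-C) ≤ ‖ω (γ b)‖ / ‖ω (γ a)‖ ∧ ‖ω (γ b)‖ / ‖ω (γ a)‖ ≤ Real.exp C := by
  have huIcc : Set.uIcc a b = Set.Icc a b := Set.uIcc_of_le hab
  -- F s = -(1/2) log ⟪ω(γ s), ω(γ s)⟫ has derivative div3 ξ (γ s)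
  set F : ℝ → ℝ := fun s => -(1/2) * Real.log ⟪ω (γ s), ω (γ s)⟫ with hFdef
  have hderiv : ∀ s ∈ Set.uIcc a b, HasDerivAt F (div3 ξ (γ s)) s := by
    intro s hs
    rw [huIcc] at hs
    have hx := hγN s hs
    have hnx : ‖ω (γ s)‖ ≠ 0 := norm_ne_zero_iff.2 hx
    have hD : HasFDerivAt ω (fderiv ℝ ω (γ s)) (γ s) :=
      (hω.differentiable one_ne_zero (γ s)).hasFDerivAt
    have hcomp : HasDerivAt (fun t => ω (γ t)) (fderiv ℝ ω (γ s) (ξ (γ s))) s :=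
      hD.comp_hasDerivAt s (hγ s hs)
    have hP : HasDerivAt (fun t => ⟪ω (γ t), ω (γ t)⟫)
        (⟪ω (γ s), fderiv ℝ ω (γ s) (ξ (γ s))⟫ + ⟪fderiv ℝ ω (γ s) (ξ (γ s)), ω (γ s)⟫) s :=
      hcomp.inner ℝ hcomp
    have hPx : ⟪ω (γ s), ω (γ s)⟫ ≠ 0 := inner_self_ne_zero.2 hx
    have hlog := (hP.log hPx).const_mul (-(1/2) : ℝ)
    convert hlog using 1
    any_goals rfl
    rw [aux_div3_xi ω ξ hω hdiv hξ (γ s) hx, hξ (γ s) hx]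
    rw [map_smul, real_inner_smul_right, real_inner_smul_left,
      real_inner_comm (fderiv ℝ ω (γ s) (ω (γ s))) (ω (γ s)),
      real_inner_self_eq_norm_mul_norm]
    generalize ⟪ω (γ s), (fderiv ℝ ω (γ s)) (ω (γ s))⟫ = K
    have harith : ∀ N k : ℝ, N ≠ 0 → -(N ^ 3)⁻¹ * k
        = -(1 / 2) * ((N⁻¹ * k + N⁻¹ * k) / (N * N)) := by
      intro N k hN
      field_simp
      all_goals try ring
      all_goals exact Or.inl trivial
    exact harith _ _ hnx
  -- integrability of the integrand
  have hcont : ContinuousOn (fun s => div3 ξ (γ s)) (Set.uIcc a b) := by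
    rw [huIcc]
    have hγc : ContinuousOn γ (Set.Icc a b) := fun s hs =>
      ((hγ s hs).continuousAt).continuousWithinAt
    have hωc : Continuous ω := hω.continuous
    have hDc : Continuous (fderiv ℝ ω) := hω.continuous_fderiv one_ne_zero
    have h1 : ContinuousOn (fun s => ω (γ s)) (Set.Icc a b) := hωc.comp_continuousOn hγc
    have h2 : ContinuousOn (fun s => fderiv ℝ ω (γ s) (ω (γ s))) (Set.Icc a b) :=
      (hDc.comp_continuousOn hγc).clm_apply h1
    have h3 : ContinuousOn (fun s => ⟪ω (γ s), fderiv ℝ ω (γ s) (ω (γ s))⟫) (Set.Icc a b) :=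
      h1.inner h2
    have h4 : ContinuousOn (fun s => -(‖ω (γ s)‖ ^ 3)⁻¹ *
        ⟪ω (γ s), fderiv ℝ ω (γ s) (ω (γ s))⟫) (Set.Icc a b) := by
      apply ContinuousOn.mul _ h3
      apply ContinuousOn.neg
      apply ContinuousOn.inv₀ (h1.norm.pow 3)
      intro s hs
      exact pow_ne_zero 3 (norm_ne_zero_iff.2 (hγN s hs))
    apply h4.congr
    intro s hs
    exact aux_div3_xi ω ξ hω hdiv hξ (γ s) (hγN s hs)
  have hInt : IntervalIntegrable (fun s => div3 ξ (γ s)) MeasureTheory.volume a b :=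
    hcont.intervalIntegrable
  have hFTC : ∫ s in a..b, div3 ξ (γ s) = F b - F a :=
    intervalIntegral.integral_eq_sub_of_hasDerivAt hderiv hInt
  -- identify F b - F a with -log(‖ω(γ b)‖/‖ω(γ a)‖)
  have ha' : a ∈ Set.Icc a b := Set.left_mem_Icc.2 hab
  have hb' : b ∈ Set.Icc a b := Set.right_mem_Icc.2 hab
  have hna : 0 < ‖ω (γ a)‖ := norm_pos_iff.2 (hγN a ha')
  have hnb : 0 < ‖ω (γ b)‖ := norm_pos_iff.2 (hγN b hb')
  have hlogv : ∀ s ∈ Set.Icc a b,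
      Real.log ⟪ω (γ s), ω (γ s)⟫ = 2 * Real.log ‖ω (γ s)‖ := by
    intro s hs
    rw [real_inner_self_eq_norm_mul_norm, Real.log_mul (norm_ne_zero_iff.2 (hγN s hs))
      (norm_ne_zero_iff.2 (hγN s hs))]
    ring
  have hFba : F b - F a = -(Real.log (‖ω (γ b)‖ / ‖ω (γ a)‖)) := by
    rw [Real.log_div hnb.ne' hna.ne']
    simp only [hFdef, hlogv a ha', hlogv b hb']
    ring
  set R : ℝ := ‖ω (γ b)‖ / ‖ω (γ a)‖ with hR
  have hRpos : 0 < R := div_pos hnb hna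
  have habs : |Real.log R| ≤ C := by
    rw [hFTC, hFba, abs_neg] at hint
    exact hint
  rw [abs_le] at habs
  constructor
  · calc Real.exp (-C) ≤ Real.exp (Real.log R) := Real.exp_le_exp.2 habs.1
      _ = R := Real.exp_log hRpos
  · calc R = Real.exp (Real.log R) := (Real.exp_log hRpos).symm
      _ ≤ Real.exp C := Real.exp_le_exp.2 habs.2
end
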